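/- For every integer q ≥ 2, the set of additive submonoids of ℚ whose carrier set is contained in Z[1/q] is uncountable (not a countable set). -/

import Mathlib

/-- `Z[1/q]`: the rationals of the form `n / q^i`. -/
def ZOneOverQ (q : ℤ) : Set ℚ := {x : ℚ | ∃ (n : ℤ) (i : ℕ), x = (n : ℚ) / (q : ℚ) ^ i}

/-! The submonoids `Z[1/q] ∩ ({0} ∪ (r, ∞))` for `r ≥ 0` are pairwise distinct because `Z[1/q]` is
dense in `ℝ`, so `r ↦ Z[1/q] ∩ ({0} ∪ (r, ∞))` embeds the uncountable interval `[0, 1]`. -/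

namespace ZOneOverQ

theorem zero_mem (q : ℤ) : (0 : ℚ) ∈ ZOneOverQ q := ⟨0, 0, by simp⟩

theorem add_mem {q : ℤ} (hq : q ≠ 0) {x y : ℚ} (hx : x ∈ ZOneOverQ q) (hy : y ∈ ZOneOverQ q) :
    x + y ∈ ZOneOverQ q := by
  obtain ⟨n, i, rfl⟩ := hx
  obtain ⟨m, j, rfl⟩ := hy
  refine ⟨n * q ^ j + m * q ^ i, i + j, ?_⟩
  have hq' : (q : ℚ) ≠ 0 := by exact_mod_cast hq
  field_simp
  push_cast
  ring

theorem exists_mem_btwn {q : ℤ} (hq : 1 < q) {a b : ℝ} (hab : a < b) :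
    ∃ x ∈ ZOneOverQ q, a < x ∧ (x : ℝ) < b := by
  have hq' : (1 : ℝ) < q := by exact_mod_cast hq
  obtain ⟨i, hi⟩ := pow_unbounded_of_one_lt (b - a)⁻¹ hq'
  have hpos : (0 : ℝ) < (q : ℝ) ^ i := by positivity
  have hstep : 1 / (q : ℝ) ^ i < b - a := by
    rw [div_lt_iff₀ hpos]
    rwa [inv_lt_iff_one_lt_mul₀ (sub_pos.2 hab), mul_comm] at hi
  set n : ℤ := ⌊a * (q : ℝ) ^ i⌋ + 1
  refine ⟨n / (q : ℚ) ^ i, ⟨n, i, rfl⟩, ?_, ?_⟩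
  · push_cast [n]
    rw [lt_div_iff₀ hpos]
    exact Int.lt_floor_add_one _
  · have hn : (n : ℝ) ≤ a * q ^ i + 1 := by
      push_cast [n]
      linarith [Int.floor_le (a * (q : ℝ) ^ i)]
    calc ((n / (q : ℚ) ^ i : ℚ) : ℝ) = n / (q : ℝ) ^ i := by push_cast; rfl
      _ ≤ (a * q ^ i + 1) / q ^ i := by gcongr
      _ = a + 1 / q ^ i := by field_simp
      _ < b := by linarith

def addSubmonoid (q : ℤ) (hq : q ≠ 0) : AddSubmonoid ℚ where
  carrier := ZOneOverQ q
  zero_mem' := zero_mem q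
  add_mem' := add_mem hq

end ZOneOverQ

def zeroOrAbove (r : ℝ) : AddSubmonoid ℚ where
  carrier := {x : ℚ | x = 0 ∨ 0 < x ∧ r < x}
  zero_mem' := Or.inl rfl
  add_mem' := by
    rintro x y (rfl | ⟨hx, hrx⟩) (rfl | ⟨hy, hry⟩)
    · exact Or.inl (add_zero 0)
    · simpa using Or.inr ⟨hy, hry⟩
    · simpa using Or.inr ⟨hx, hrx⟩
    · refine Or.inr ⟨add_pos hx hy, ?_⟩
      have : (0 : ℝ) < y := by exact_mod_cast hy
      push_cast
      linarith

theorem zeroOrAbove_anti : Antitone zeroOrAbove :=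
  fun _ _ hrs _ hx ↦ hx.imp_right fun ⟨hx0, hrx⟩ ↦ ⟨hx0, hrs.trans_lt hrx⟩

theorem strictAntiOn_inf_zeroOrAbove {q : ℤ} (hq : 1 < q) :
    StrictAntiOn (fun r ↦ ZOneOverQ.addSubmonoid q (by omega) ⊓ zeroOrAbove r) (Set.Ici 0) := by
  intro r (hr : 0 ≤ r) s _ hrs
  refine lt_of_le_not_ge (inf_le_inf_left _ (zeroOrAbove_anti hrs.le)) fun hle ↦ ?_
  obtain ⟨x, hxq, hrx, hxs⟩ := ZOneOverQ.exists_mem_btwn hq hrs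
  have hx : 0 < x := by exact_mod_cast hr.trans_lt hrx
  rcases (hle ⟨hxq, Or.inr ⟨hx, hrx⟩⟩).2 with hx0 | ⟨-, hsx⟩
  · exact hx.ne' hx0
  · exact hsx.not_gt hxs

/-- The additive submonoids of `ℚ` contained in `Z[1/q]` form an uncountable set. -/
theorem uncountably_many_submonoids (q : ℤ) (hq : 2 ≤ q) :
    ¬ Set.Countable {M : AddSubmonoid ℚ | (M : Set ℚ) ⊆ ZOneOverQ q} := by
  intro hcount
  have hmaps : Set.MapsTo (fun r ↦ ZOneOverQ.addSubmonoid q (by omega) ⊓ zeroOrAbove r)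
      (Set.Icc 0 1) {M : AddSubmonoid ℚ | (M : Set ℚ) ⊆ ZOneOverQ q} :=
    fun _ _ _ hx ↦ hx.1
  have hIcc : (Set.Icc (0 : ℝ) 1).Countable := hmaps.countable_of_injOn
    ((strictAntiOn_inf_zeroOrAbove hq).injOn.mono Set.Icc_subset_Ici_self) hcount
  exact zero_lt_one.not_ge (Cardinal.Real.Icc_countable_iff.mp hIcc)
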